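/- Let A ∈ GL₄(ℂ) and let φ : ℙ¹(ℂ) → ℙ³(ℂ) be the twisted cubic given by φ(s : t) = A · (s³, s²t, st², t³). Let X = {f = 0} ⊂ ℙ³(ℂ) be a surface of degree 6 whose only singularities are ordinary triple points. Then the image of φ contains at most six triple points of X. -/

import Mathlib

open MvPolynomial

noncomputable section

/-- Iterated partial derivative of `f` along a list of variable indices. -/
def pderivList {n : ℕ} (l : List (Fin n)) (f : MvPolynomial (Fin n) ℂ) :
    MvPolynomial (Fin n) ℂ :=
  l.foldl (fun g i => MvPolynomial.pderiv i g) f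

/-- All partial derivatives of `f` of order `< m` vanish at `p`
(`P` has multiplicity `≥ m` on `{f = 0}`). -/
def MultAtLeast {n : ℕ} (f : MvPolynomial (Fin n) ℂ) (p : Fin n → ℂ) (m : ℕ) : Prop :=
  ∀ l : List (Fin n), l.length < m → MvPolynomial.eval p (pderivList l f) = 0

/-- `p` is (a representative of) a singular point of `{f = 0}`. -/
def SingularAt (f : MvPolynomial (Fin 4) ℂ) (p : Fin 4 → ℂ) : Prop :=
  MultAtLeast f p 2

/-- The partial derivatives of `c` have no common zero in `ℂⁿ ∖ {0}`. -/
def NowhereSingular {n : ℕ} (c : MvPolynomial (Fin n) ℂ) : Prop :=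
  ∀ p : Fin n → ℂ, p ≠ 0 → ∃ i, MvPolynomial.eval p (MvPolynomial.pderiv i c) ≠ 0

/-- Linear change of coordinates: `substMatrix B f` is the polynomial `x ↦ f (B.mulVec x)`. -/
def substMatrix {n : ℕ} (B : Matrix (Fin n) (Fin n) ℂ) (f : MvPolynomial (Fin n) ℂ) :
    MvPolynomial (Fin n) ℂ :=
  MvPolynomial.aeval (fun i => ∑ j, MvPolynomial.C (B i j) * MvPolynomial.X j) f

/-- `p` is (a representative of) an ordinary triple point of the degree-`d` surface `{f = 0}`:
all partials of order `≤ 2` vanish at `p`, some third-order partial does not, and after a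
linear change of coordinates taking `(0,0,0,1)` to `p`, writing `f` as
`∑ⱼ x₃^(d-j) fⱼ(x₀,x₁,x₂)` with `fⱼ` homogeneous of degree `j`, the cubic `f₃` is nonsingular. -/
def OrdinaryTriplePointAt (d : ℕ) (f : MvPolynomial (Fin 4) ℂ) (p : Fin 4 → ℂ) : Prop :=
  MultAtLeast f p 3 ∧
  (∃ l : List (Fin 4), l.length = 3 ∧ MvPolynomial.eval p (pderivList l f) ≠ 0) ∧
  ∃ B : Matrix (Fin 4) (Fin 4) ℂ, IsUnit B.det ∧ B.mulVec ![0, 0, 0, 1] = p ∧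
    ∃ g : ℕ → MvPolynomial (Fin 3) ℂ,
      (∀ j, (g j).IsHomogeneous j) ∧
      substMatrix B f =
        ∑ j ∈ Finset.range (d + 1),
          (MvPolynomial.X 3) ^ (d - j) * MvPolynomial.rename Fin.castSucc (g j) ∧
      NowhereSingular (g 3)

/-- The set of singular points of `{f = 0}` in `ℙ³(ℂ)`. -/
def SingSet (f : MvPolynomial (Fin 4) ℂ) : Set (Projectivization ℂ (Fin 4 → ℂ)) :=
  {P | SingularAt f P.rep}

/-- `{f = 0}` has `ν` ordinary triple points as its only singularities. -/
def OnlyTriplePoints (d ν : ℕ) (f : MvPolynomial (Fin 4) ℂ) : Prop :=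
  (SingSet f).Finite ∧ (SingSet f).ncard = ν ∧
  ∀ P ∈ SingSet f, OrdinaryTriplePointAt d f P.rep

/-!
Pull `f` back along `ψ = A · (s³, s²t, st², t³)`. The binary form `f ∘ ψ` has degree 18 and
vanishes to order 3 at each of the `k` parameters, so if it is nonzero then `3k ≤ 18`.
Otherwise the curve lies on the surface. As the singular locus is finite, some `∂ⱼf ∘ ψ` is
nonzero, and then for all but finitely many parameters `p` the first polar `Σⱼ ψⱼ(p) ∂ⱼf` of the
surface with respect to the curve point `ψ(p)` restricts to a nonzero binary form of degree 15.
It vanishes to order 2 at the triple points, where all second derivatives of `f` vanish, and also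
at `p`, because the curve lies on the surface (Euler's formula and the chain rule). Hence
`2(k + 1) ≤ 15`.

Both counts rest on the fact that a nonzero binary form of degree `d` vanishing to order `r` at
`k` distinct points of `ℙ¹` satisfies `k r ≤ d`.
-/

namespace MvPolynomial

variable {R σ : Type*} [CommSemiring R]

theorem IsHomogeneous.eval_smul {φ : MvPolynomial σ R} {d : ℕ} (h : φ.IsHomogeneous d)
    (c : R) (x : σ → R) : eval (c • x) φ = c ^ d * eval x φ := by
  simp only [eval_eq, Finset.mul_sum]
  refine Finset.sum_congr rfl fun v hv => ?_
  have hdeg : ∑ i ∈ v.support, v i = d := by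
    simpa [Finsupp.weight_apply, Finsupp.sum] using h (mem_support_iff.mp hv)
  simp only [Pi.smul_apply, smul_eq_mul, mul_pow, Finset.prod_mul_distrib,
    Finset.prod_pow_eq_pow_sum, hdeg]
  ring

theorem eval_aeval {τ : Type*} (q : τ → R) (x : σ → MvPolynomial τ R) (g : MvPolynomial σ R) :
    eval q (aeval x g) = eval (fun j => eval q (x j)) g := by
  rw [aeval_eq_bind₁, eval, eval₂Hom_bind₁]
  rfl

theorem derivation_aeval {A : Type*} [CommSemiring A] [Algebra R A] [Fintype σ]
    (D : Derivation R A A) (x : σ → A) (f : MvPolynomial σ R) :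
    D (aeval x f) = ∑ j, aeval x (pderiv j f) * D (x j) := by
  classical
  induction f using MvPolynomial.induction_on with
  | C a => simp
  | add p q hp hq => simp only [map_add, hp, hq, add_mul, Finset.sum_add_distrib]
  | mul_X p i hp =>
    simp only [map_mul, aeval_X, Derivation.leibniz, smul_eq_mul, hp, pderiv_X,
      map_add, add_mul, Finset.sum_add_distrib, Pi.single_apply, apply_ite (aeval x),
      map_zero, mul_ite, mul_one, mul_zero, ite_mul, zero_mul, Finset.sum_ite_eq,
      Finset.mem_univ, if_true, Finset.mul_sum, mul_assoc]

theorem natDegree_aeval_X_one_le {q : MvPolynomial (Fin 2) R} {d : ℕ} (hq : q.IsHomogeneous d) :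
    (aeval ![(Polynomial.X : Polynomial R), 1] q).natDegree ≤ d := by
  rw [q.as_sum, map_sum]
  refine Polynomial.natDegree_sum_le_of_forall_le _ _ fun v hv => ?_
  have hv0 : v 0 ≤ d := by
    rw [← hq (mem_support_iff.mp hv), Finsupp.weight_apply, Finsupp.sum_fintype _ _ (by simp)]
    simp
  simpa [aeval_monomial, Finsupp.prod_fintype, Fin.prod_univ_two, ← Polynomial.C_eq_algebraMap]
    using (Polynomial.natDegree_C_mul_X_pow_le _ _).trans hv0

theorem derivative_aeval_X_one (q : MvPolynomial (Fin 2) R) :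
    Polynomial.derivative (aeval ![(Polynomial.X : Polynomial R), 1] q) =
      aeval ![(Polynomial.X : Polynomial R), 1] (pderiv 0 q) := by
  simpa [Fin.sum_univ_two] using
    derivation_aeval Polynomial.derivative' ![(Polynomial.X : Polynomial R), 1] q

theorem eval_aeval_X_one (z : R) (q : MvPolynomial (Fin 2) R) :
    (aeval ![(Polynomial.X : Polynomial R), 1] q).eval z = eval ![z, 1] q := by
  have hz : (fun j => Polynomial.aeval z (![(Polynomial.X : Polynomial R), 1] j)) = ![z, 1] := by
    funext j
    fin_cases j <;> simp
  rw [← Polynomial.coe_aeval_eq_eval, comp_aeval_apply, hz]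
  rfl

end MvPolynomial

section Multiplicity

variable {n m : ℕ}

@[simp]
theorem pderivList_cons (i : Fin n) (l : List (Fin n)) (f : MvPolynomial (Fin n) ℂ) :
    pderivList (i :: l) f = pderivList l (pderiv i f) := rfl

theorem pderivList_add (l : List (Fin n)) (f g : MvPolynomial (Fin n) ℂ) :
    pderivList l (f + g) = pderivList l f + pderivList l g := by
  induction l generalizing f g with
  | nil => rfl
  | cons i l ih => simp [ih]

theorem pderivList_C_mul (l : List (Fin n)) (c : ℂ) (f : MvPolynomial (Fin n) ℂ) :
    pderivList l (C c * f) = C c * pderivList l f := by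
  induction l generalizing f with
  | nil => rfl
  | cons i l ih => simp [ih]

theorem pderivList_sum {ι : Type*} (l : List (Fin n)) (s : Finset ι)
    (f : ι → MvPolynomial (Fin n) ℂ) :
    pderivList l (∑ i ∈ s, f i) = ∑ i ∈ s, pderivList l (f i) := by
  induction l generalizing f with
  | nil => rfl
  | cons i l ih => simp [ih]

theorem MvPolynomial.IsHomogeneous.pderivList {f : MvPolynomial (Fin n) ℂ} {d : ℕ}
    (h : f.IsHomogeneous d) (l : List (Fin n)) :
    (pderivList l f).IsHomogeneous (d - l.length) := by
  induction l generalizing f d with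
  | nil => simpa
  | cons i l ih => simpa [Nat.sub_sub, add_comm] using ih h.pderiv

theorem multAtLeast_two_iff {f : MvPolynomial (Fin n) ℂ} {p : Fin n → ℂ} :
    MultAtLeast f p 2 ↔ eval p f = 0 ∧ ∀ i, eval p (pderiv i f) = 0 := by
  refine ⟨fun h => ⟨h [] (by simp), fun i => h [i] (by simp)⟩, ?_⟩
  rintro ⟨h0, h1⟩ (_ | ⟨i, _ | ⟨j, l⟩⟩) hl
  · exact h0
  · exact h1 i
  · simp at hl

theorem MultAtLeast.smul {f : MvPolynomial (Fin n) ℂ} {d r : ℕ} (hf : f.IsHomogeneous d)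
    {p : Fin n → ℂ} (h : MultAtLeast f p r) (c : ℂ) : MultAtLeast f (c • p) r := by
  intro l hl
  rw [(hf.pderivList l).eval_smul, h l hl, mul_zero]

theorem pderivList_aeval_mul_mem_span (x : Fin n → MvPolynomial (Fin m) ℂ)
    (f : MvPolynomial (Fin n) ℂ) (u : MvPolynomial (Fin m) ℂ) (l : List (Fin m)) :
    pderivList l (aeval x f * u) ∈ Ideal.span
      {g | ∃ l' : List (Fin n), l'.length ≤ l.length ∧ g = aeval x (pderivList l' f)} := by
  induction l generalizing f u with
  | nil => exact Ideal.mul_mem_right u _ (Ideal.subset_span ⟨[], le_rfl, rfl⟩)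
  | cons i l ih =>
    rw [pderivList_cons, Derivation.leibniz, derivation_aeval, smul_eq_mul, smul_eq_mul,
      Finset.mul_sum, pderivList_add, pderivList_sum]
    refine Ideal.add_mem _ ?_ (Ideal.sum_mem _ fun j _ => ?_)
    · refine Ideal.span_mono ?_ (ih f _)
      rintro g ⟨l', hl', rfl⟩
      exact ⟨l', hl'.trans (by simp), rfl⟩
    · rw [mul_left_comm]
      refine Ideal.span_mono ?_ (ih (pderiv j f) _)
      rintro g ⟨l', hl', rfl⟩
      exact ⟨j :: l', by simpa using hl', rfl⟩

theorem MultAtLeast.aeval {x : Fin n → MvPolynomial (Fin m) ℂ} {f : MvPolynomial (Fin n) ℂ}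
    {q : Fin m → ℂ} {r : ℕ} (h : MultAtLeast f (fun j => eval q (x j)) r) :
    MultAtLeast (MvPolynomial.aeval x f) q r := by
  intro l hl
  have hspan : Ideal.span {g | ∃ l' : List (Fin n), l'.length ≤ l.length ∧
      g = MvPolynomial.aeval x (pderivList l' f)} ≤ RingHom.ker (eval q) := by
    rw [Ideal.span_le]
    rintro g ⟨l', hl', rfl⟩
    rw [SetLike.mem_coe, RingHom.mem_ker, eval_aeval]
    exact h l' (hl'.trans_lt hl)
  simpa using hspan (by simpa using pderivList_aeval_mul_mem_span x f 1 l)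

end Multiplicity

section BinaryForms

variable {K : Type*} [Field K]

theorem iterate_derivative_aeval_X_one (q : MvPolynomial (Fin 2) ℂ) (k : ℕ) :
    Polynomial.derivative^[k] (aeval ![(Polynomial.X : Polynomial ℂ), 1] q) =
      aeval ![(Polynomial.X : Polynomial ℂ), 1] (pderivList (List.replicate k 0) q) := by
  induction k generalizing q with
  | zero => rfl
  | succ k ih =>
    rw [Function.iterate_succ_apply, derivative_aeval_X_one, ih]
    rfl

theorem MvPolynomial.IsHomogeneous.eq_zero_of_forall_eval_line_eq_zero [Infinite K]
    {h : MvPolynomial (Fin 2) K} {d : ℕ} (hh : h.IsHomogeneous d) (c : K)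
    (hline : ∀ z, eval ![z, c * z + 1] h = 0) : h = 0 := by
  have hprod : (X 1 - C c * X 0) * h = 0 := by
    refine MvPolynomial.funext fun x => ?_
    rw [map_mul, map_zero]
    by_cases hu : x 1 - c * x 0 = 0
    · simp [hu]
    · have hx : x = (x 1 - c * x 0) •
          ![x 0 / (x 1 - c * x 0), c * (x 0 / (x 1 - c * x 0)) + 1] := by
        ext j
        fin_cases j
        · simp [mul_div_cancel₀ _ hu]
        · simp only [Fin.mk_one, Pi.smul_apply, Matrix.cons_val_one, Matrix.cons_val_fin_one,
            smul_eq_mul]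
          field_simp
          ring
      rw [hx, hh.eval_smul, hline, mul_zero, mul_zero]
  refine (mul_eq_zero.mp hprod).resolve_left fun h0 => ?_
  simpa using congrArg (eval ![0, 1]) h0

theorem pow_X_sub_C_dvd_of_isRoot_iterate_derivative [CharZero K] {P : Polynomial K} {z : K}
    {r : ℕ} (h : ∀ k < r, (Polynomial.derivative^[k] P).IsRoot z) :
    (Polynomial.X - Polynomial.C z) ^ r ∣ P := by
  rcases eq_or_ne P 0 with rfl | hP
  · exact dvd_zero _
  cases r with
  | zero => simp
  | succ r =>
    exact (Polynomial.le_rootMultiplicity_iff hP).mp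
      (Polynomial.lt_rootMultiplicity_of_isRoot_iterate_derivative hP fun k hk => h k (by omega))

theorem card_mul_le_natDegree {ι : Type*} [Fintype ι] {P : Polynomial K} (hP : P ≠ 0)
    {z : ι → K} (hz : Function.Injective z) {r : ℕ}
    (h : ∀ i, (Polynomial.X - Polynomial.C (z i)) ^ r ∣ P) :
    Fintype.card ι * r ≤ P.natDegree := by
  have hprod := Fintype.prod_dvd_of_coprime
    (fun i j hij => ((Polynomial.pairwise_coprime_X_sub_C hz) hij).pow) h
  calc Fintype.card ι * r = (∏ i, (Polynomial.X - Polynomial.C (z i)) ^ r).natDegree := by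
        rw [Polynomial.natDegree_prod_of_monic _ _ fun i _ => (Polynomial.monic_X_sub_C _).pow r]
        simp
    _ ≤ P.natDegree := Polynomial.natDegree_le_of_dvd hprod hP

theorem exists_notMem_forall_sub_mul_ne_zero [Infinite K] {ι : Type*} [Fintype ι]
    (x : ι → Fin 2 → K) (hx0 : ∀ i, x i ≠ 0) {S : Set K} (hS : S.Finite) :
    ∃ c ∉ S, ∀ i, x i 1 - c * x i 0 ≠ 0 := by
  classical
  obtain ⟨c, hc⟩ := Infinite.exists_notMem_finset
    (hS.toFinset ∪ Finset.univ.image fun i => x i 1 / x i 0)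
  rw [Finset.mem_union, not_or, Set.Finite.mem_toFinset] at hc
  refine ⟨c, hc.1, fun i hi => ?_⟩
  by_cases h0 : x i 0 = 0
  · exact hx0 i (by ext j; fin_cases j <;> simp_all)
  · exact hc.2 (Finset.mem_image.mpr ⟨i, Finset.mem_univ _, by
      rw [div_eq_iff h0]
      linear_combination hi⟩)

variable {ι : Type*} [Fintype ι] {h : MvPolynomial (Fin 2) ℂ} {d r : ℕ}

theorem card_mul_le_of_multAtLeast (hne : h ≠ 0) (hh : h.IsHomogeneous d)
    (x : ι → Fin 2 → ℂ) (hx0 : ∀ i, x i ≠ 0)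
    (hx : Pairwise fun i j => x i 0 * x j 1 ≠ x j 0 * x i 1)
    (hmult : ∀ i, MultAtLeast h (x i) r) : Fintype.card ι * r ≤ d := by
  -- after the shear no point lies on `X₁ = 0`, so dehomogenizing at `X₁ = 1` loses no root
  obtain ⟨c, -, hc⟩ := exists_notMem_forall_sub_mul_ne_zero x hx0 Set.finite_empty
  set shear : Fin 2 → MvPolynomial (Fin 2) ℂ := ![X 0, C c * X 0 + X 1]
  set P := aeval ![(Polynomial.X : Polynomial ℂ), 1] (aeval shear h) with hPdef
  have hshear (z : ℂ) : (fun j => eval ![z, 1] (shear j)) = ![z, c * z + 1] := by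
    ext j
    fin_cases j <;> simp [shear]
  have hP : P ≠ 0 := fun h0 => hne <| hh.eq_zero_of_forall_eval_line_eq_zero c fun z => by
    rw [← hshear, ← eval_aeval, ← eval_aeval_X_one, ← hPdef, h0, Polynomial.eval_zero]
  have hdeg : P.natDegree ≤ d := by
    have hlin (j : Fin 2) : (shear j).IsHomogeneous 1 := by
      fin_cases j
      · exact isHomogeneous_X ℂ 0
      · exact ((isHomogeneous_X ℂ 0).C_mul c).add (isHomogeneous_X ℂ 1)
    simpa [hPdef] using natDegree_aeval_X_one_le (hh.aeval shear hlin)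
  set z : ι → ℂ := fun i => x i 0 / (x i 1 - c * x i 0)
  have hroot (i : ι) : (Polynomial.X - Polynomial.C (z i)) ^ r ∣ P := by
    refine pow_X_sub_C_dvd_of_isRoot_iterate_derivative fun k hk => ?_
    have hpt : (fun j => eval ![z i, 1] (shear j)) = (x i 1 - c * x i 0)⁻¹ • x i := by
      rw [hshear]
      ext j
      fin_cases j
      · simp [z, div_eq_inv_mul]
      · simp only [Fin.mk_one, Matrix.cons_val_one, Matrix.cons_val_fin_one, Pi.smul_apply,
          smul_eq_mul, z]
        field_simp [hc i]
        ring
    rw [Polynomial.IsRoot, iterate_derivative_aeval_X_one, eval_aeval_X_one]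
    exact MultAtLeast.aeval (hpt ▸ (hmult i).smul hh _) _ (by simpa using hk)
  have hz : Function.Injective z := fun i j hij => by
    by_contra hne
    exact hx hne (by linear_combination (div_eq_div_iff (hc i) (hc j)).mp hij)
  exact (card_mul_le_natDegree hP hz hroot).trans hdeg

theorem card_add_one_mul_le_of_multAtLeast (hne : h ≠ 0) (hh : h.IsHomogeneous d)
    (x : ι → Fin 2 → ℂ) (hx0 : ∀ i, x i ≠ 0)
    (hx : Pairwise fun i j => x i 0 * x j 1 ≠ x j 0 * x i 1)
    (hmult : ∀ i, MultAtLeast h (x i) r) (c : ℂ) (hc : ∀ i, x i 1 - c * x i 0 ≠ 0)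
    (hmc : MultAtLeast h ![1, c] r) : (Fintype.card ι + 1) * r ≤ d := by
  set p : Option ι → Fin 2 → ℂ := fun o => o.elim ![1, c] x
  have hp0 : ∀ o, p o ≠ 0 := by
    rintro (_ | i) h0
    · simpa [p] using congrFun h0 0
    · exact hx0 i h0
  have hp : Pairwise fun a b => p a 0 * p b 1 ≠ p b 0 * p a 1 := by
    rintro (_ | i) (_ | j) hij
    · exact (hij rfl).elim
    · exact fun h0 => hc j (by simp [p] at h0; linear_combination h0)
    · exact fun h0 => hc i (by simp [p] at h0; linear_combination -h0)
    · exact hx (Option.some_injective _ |>.ne_iff.mp hij)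
  simpa using card_mul_le_of_multAtLeast hne hh p hp0 hp (by rintro (_ | i); exacts [hmc, hmult i])

end BinaryForms

def polar {n : ℕ} (y : Fin n → ℂ) (f : MvPolynomial (Fin n) ℂ) : MvPolynomial (Fin n) ℂ :=
  ∑ j, C (y j) * pderiv j f

section Polar

variable {n m : ℕ} {f : MvPolynomial (Fin n) ℂ}

theorem MvPolynomial.IsHomogeneous.polar {d : ℕ} (hf : f.IsHomogeneous d) (y : Fin n → ℂ) :
    (_root_.polar y f).IsHomogeneous (d - 1) :=
  IsHomogeneous.sum _ _ _ fun _ _ => hf.pderiv.C_mul _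

theorem MultAtLeast.polar {p : Fin n → ℂ} {r : ℕ} (h : MultAtLeast f p (r + 1))
    (y : Fin n → ℂ) : MultAtLeast (_root_.polar y f) p r := by
  intro l hl
  simp only [_root_.polar, pderivList_sum, pderivList_C_mul, map_sum, map_mul]
  exact Finset.sum_eq_zero fun j _ => by rw [← pderivList_cons, h _ (by simpa), mul_zero]

theorem multAtLeast_two_aeval_polar {x : Fin n → MvPolynomial (Fin m) ℂ} {d : ℕ}
    (hf : f.IsHomogeneous d) (hx : aeval x f = 0) (p : Fin m → ℂ) :
    MultAtLeast (aeval x (polar (fun j => eval p (x j)) f)) p 2 := by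
  set G := fun j => aeval x (pderiv j f)
  have heuler : ∑ j, x j * G j = 0 := by
    have := congrArg (aeval x) hf.sum_X_mul_pderiv
    simpa only [map_sum, map_mul, aeval_X, map_nsmul, hx, smul_zero] using this
  have htangent (i : Fin m) : ∑ j, x j * pderiv i (G j) = 0 := by
    have hchain : ∑ j, G j * pderiv i (x j) = 0 := by
      rw [← derivation_aeval, hx, map_zero]
    simpa [Derivation.leibniz, Finset.sum_add_distrib, hchain, mul_comm] using
      congrArg (pderiv i) heuler
  have hK : aeval x (polar (fun j => eval p (x j)) f) = ∑ j, C (eval p (x j)) * G j := by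
    simp [polar, G, algebraMap_eq]
  rw [multAtLeast_two_iff, hK]
  refine ⟨?_, fun i => ?_⟩
  · simpa using congrArg (eval p) heuler
  · simpa using congrArg (eval p) (htangent i)

end Polar

section TwistedCubic

open Matrix

def twistedCubic (A : Matrix (Fin 4) (Fin 4) ℂ) : Fin 4 → MvPolynomial (Fin 2) ℂ :=
  A.map C *ᵥ ![X 0 ^ 3, X 0 ^ 2 * X 1, X 0 * X 1 ^ 2, X 1 ^ 3]

variable {A : Matrix (Fin 4) (Fin 4) ℂ} {f : MvPolynomial (Fin 4) ℂ}

@[simp]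
theorem eval_twistedCubic (A : Matrix (Fin 4) (Fin 4) ℂ) (a b : ℂ) (j : Fin 4) :
    eval ![a, b] (twistedCubic A j) = (A *ᵥ ![a ^ 3, a ^ 2 * b, a * b ^ 2, b ^ 3]) j := by
  simp [twistedCubic, mulVec, dotProduct, Fin.sum_univ_four]

theorem isHomogeneous_twistedCubic (A : Matrix (Fin 4) (Fin 4) ℂ) (j : Fin 4) :
    (twistedCubic A j).IsHomogeneous 3 := by
  refine IsHomogeneous.sum _ _ _ fun r _ => IsHomogeneous.C_mul ?_ _
  fin_cases r
  · exact isHomogeneous_X_pow 0 3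
  · exact (isHomogeneous_X_pow 0 2).mul (isHomogeneous_X ℂ 1)
  · exact (isHomogeneous_X ℂ 0).mul (isHomogeneous_X_pow 1 2)
  · exact isHomogeneous_X_pow 1 3

theorem finite_setOf_dotProduct_twistedCubic_eq_zero (hA : IsUnit A.det) {l : Fin 4 → ℂ}
    (hl : l ≠ 0) : {z : ℂ | l ⬝ᵥ A *ᵥ ![1, z, z ^ 2, z ^ 3] = 0}.Finite := by
  set μ := l ᵥ* A
  have hμ : μ ≠ 0 := fun h0 => hl <|
    (vecMul_injective_iff_isUnit.mpr ((isUnit_iff_isUnit_det A).mpr hA))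
      (h0.trans (zero_vecMul A).symm)
  set P : Polynomial ℂ := (Cubic.mk (μ 3) (μ 2) (μ 1) (μ 0)).toPoly
  have hP : P ≠ 0 := by
    rw [Ne, Cubic.toPoly_eq_zero_iff]
    intro h0
    apply hμ
    ext j
    fin_cases j
    exacts [congrArg Cubic.d h0, congrArg Cubic.c h0, congrArg Cubic.b h0, congrArg Cubic.a h0]
  refine (P.roots.toFinset.finite_toSet).subset fun z hz => ?_
  rw [Set.mem_ofPred_eq, dotProduct_mulVec] at hz
  rw [Finset.mem_coe, Multiset.mem_toFinset, Polynomial.mem_roots hP, Polynomial.IsRoot, ← hz]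
  simp [P, Cubic.toPoly, dotProduct, Fin.sum_univ_four, μ]
  ring

theorem finite_setOf_aeval_polar_twistedCubic_eq_zero (hA : IsUnit A.det)
    (hG : ∃ j, aeval (twistedCubic A) (pderiv j f) ≠ 0) :
    {z : ℂ |
      aeval (twistedCubic A) (polar (fun j => eval ![1, z] (twistedCubic A j)) f) = 0}.Finite := by
  obtain ⟨j₀, hj₀⟩ := hG
  obtain ⟨μ, hμ⟩ := ne_zero_iff.mp hj₀
  set l : Fin 4 → ℂ := fun j => coeff μ (aeval (twistedCubic A) (pderiv j f))
  refine (finite_setOf_dotProduct_twistedCubic_eq_zero hA (l := l)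
    fun h0 => hμ (congrFun h0 j₀)).subset fun z hz => ?_
  have := congrArg (coeff μ) hz
  simp only [polar, map_sum, map_mul, algHom_C, algebraMap_eq, coeff_sum, coeff_C_mul,
    coeff_zero, eval_twistedCubic] at this
  simpa [dotProduct, l, mul_comm] using this

theorem singularAt_twistedCubic (hE : aeval (twistedCubic A) f = 0)
    (hG : ∀ j, aeval (twistedCubic A) (pderiv j f) = 0) (a b : ℂ) :
    SingularAt f (A *ᵥ ![a ^ 3, a ^ 2 * b, a * b ^ 2, b ^ 3]) := by
  rw [SingularAt, multAtLeast_two_iff, ← funext (eval_twistedCubic A a b), ← eval_aeval, hE]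
  refine ⟨map_zero _, fun j => ?_⟩
  rw [← eval_aeval, hG, map_zero]

theorem SingSet.infinite_of_forall_singularAt_twistedCubic {d : ℕ} (hf : f.IsHomogeneous d)
    (hA : IsUnit A.det) (h : ∀ z : ℂ, SingularAt f (A *ᵥ ![1, z, z ^ 2, z ^ 3])) :
    (SingSet f).Infinite := by
  have hinj : Function.Injective A.mulVec :=
    mulVec_injective_iff_isUnit.mpr ((isUnit_iff_isUnit_det A).mpr hA)
  have hw (z : ℂ) : A *ᵥ ![1, z, z ^ 2, z ^ 3] ≠ 0 := fun h0 => by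
    simpa using congrFun (hinj (h0.trans (mulVec_zero A).symm)) 0
  refine Set.infinite_of_injective_forall_mem (f := fun z => Projectivization.mk ℂ _ (hw z))
    (fun z₁ z₂ h12 => ?_) fun z => ?_
  · obtain ⟨u, hu⟩ := (Projectivization.mk_eq_mk_iff _ _ _ (hw z₁) (hw z₂)).mp h12
    rw [Units.smul_def, ← mulVec_smul] at hu
    have hu0 : (u : ℂ) = 1 := by simpa using congrFun (hinj hu) 0
    simpa [hu0] using (congrFun (hinj hu) 1).symm
  · obtain ⟨u, hu⟩ := Projectivization.exists_smul_eq_mk_rep ℂ _ (hw z)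
    change SingularAt f _
    rw [← hu, Units.smul_def]
    exact (h z).smul hf _

theorem card_add_one_mul_two_le_of_aeval_twistedCubic_eq_zero {ι : Type*} [Fintype ι] {d : ℕ}
    (hf : f.IsHomogeneous d) (hA : IsUnit A.det) (hE : aeval (twistedCubic A) f = 0)
    (hG : ∃ j, aeval (twistedCubic A) (pderiv j f) ≠ 0) (x : ι → Fin 2 → ℂ)
    (hx0 : ∀ i, x i ≠ 0) (hx : Pairwise fun i j => x i 0 * x j 1 ≠ x j 0 * x i 1)
    (h3 : ∀ i, MultAtLeast f (fun j => eval (x i) (twistedCubic A j)) 3) :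
    (Fintype.card ι + 1) * 2 ≤ 3 * (d - 1) := by
  obtain ⟨c, hc, hxc⟩ := exists_notMem_forall_sub_mul_ne_zero x hx0
    (finite_setOf_aeval_polar_twistedCubic_eq_zero hA hG)
  exact card_add_one_mul_le_of_multAtLeast hc
    ((hf.polar _).aeval _ (isHomogeneous_twistedCubic A)) x hx0 hx
    (fun i => ((h3 i).polar _).aeval) c hxc (multAtLeast_two_aeval_polar hf hE _)

end TwistedCubic

theorem twisted_cubic_at_most_six_triple_points_general
    (f : MvPolynomial (Fin 4) ℂ) (hhom : f.IsHomogeneous 6)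
    (hfin : (SingSet f).Finite)
    (A : Matrix (Fin 4) (Fin 4) ℂ) (hA : IsUnit A.det)
    (k : ℕ) (s t : Fin k → ℂ)
    (hst : ∀ i, (s i, t i) ≠ (0, 0))
    (hdist : ∀ i j : Fin k, i ≠ j → s i * t j ≠ s j * t i)
    (htp : ∀ i, OrdinaryTriplePointAt 6 f
      (A.mulVec ![s i ^ 3, s i ^ 2 * t i, s i * t i ^ 2, t i ^ 3])) :
    k ≤ 6 := by
  set x : Fin k → Fin 2 → ℂ := fun i => ![s i, t i]
  have hx0 (i : Fin k) : x i ≠ 0 := fun h0 => hst i <| by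
    simpa [x] using And.intro (congrFun h0 0) (congrFun h0 1)
  have hx : Pairwise fun i j => x i 0 * x j 1 ≠ x j 0 * x i 1 := fun i j hij => by
    simpa [x] using hdist i j hij
  have h3 (i : Fin k) : MultAtLeast f (fun j => eval (x i) (twistedCubic A j)) 3 := by
    simpa only [x, eval_twistedCubic] using (htp i).1
  by_cases hE : aeval (twistedCubic A) f = 0
  · have hG : ∃ j, aeval (twistedCubic A) (pderiv j f) ≠ 0 := by
      by_contra! hG
      exact (SingSet.infinite_of_forall_singularAt_twistedCubic hhom hA fun z => by
        simpa using singularAt_twistedCubic hE hG 1 z) hfin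
    have := card_add_one_mul_two_le_of_aeval_twistedCubic_eq_zero hhom hA hE hG x hx0 hx h3
    simp at this
    omega
  · have := card_mul_le_of_multAtLeast hE (hhom.aeval _ (isHomogeneous_twistedCubic A)) x hx0 hx
      fun i => (h3 i).aeval
    simp at this
    omega

/-- A twisted cubic `φ(s:t) = A·(s³, s²t, st², t³)` (with `A ∈ GL₄(ℂ)`)
contains at most six triple points of a sextic surface whose only singularities are
ordinary triple points. -/
theorem twisted_cubic_at_most_six_triple_points
    (f : MvPolynomial (Fin 4) ℂ) (hf : f ≠ 0) (hhom : f.IsHomogeneous 6)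
    (hfin : (SingSet f).Finite)
    (htriple : ∀ P ∈ SingSet f, OrdinaryTriplePointAt 6 f P.rep)
    (A : Matrix (Fin 4) (Fin 4) ℂ) (hA : IsUnit A.det)
    (k : ℕ) (s t : Fin k → ℂ)
    (hst : ∀ i, (s i, t i) ≠ (0, 0))
    (hdist : ∀ i j : Fin k, i ≠ j → s i * t j ≠ s j * t i)
    (htp : ∀ i, OrdinaryTriplePointAt 6 f
      (A.mulVec ![s i ^ 3, s i ^ 2 * t i, s i * t i ^ 2, t i ^ 3])) :
    k ≤ 6 :=
  twisted_cubic_at_most_six_triple_points_general f hhom hfin A hA k s t hst hdist htp
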